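/- arXiv:2106.08584 — 3 statements merged into one kernel-verified Lean document; each statement's English description precedes it below -/
import Mathlib

section
/- Under the setup of the previous statement (with $\varphi$ additionally differentiable on $(0,\infty)$ with existing right derivative at $0$), for $y \in \mathbb{R}^n$ define $\tilde{\sigma}^y = \sigma - \ell(Ay-b) + \sum_{i=1}^p \omega_i^y(a_i^Ty-b_i)^2$ for a given $\sigma \in \mathbb{R}$. Then: (a) $\ell(Ay-b) - \sigma = \ell^y(Ay-b) - \tilde{\sigma}^y$; (b) $\nabla\ell(Ay-b) = \nabla\ell^y(Ay-b)$; and (c) for every $x \in \mathbb{R}^n$, $\ell(Ax-b) - \sigma \le \ell^y(Ax-b) - \tilde{\sigma}^y$. -/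
/-!
Everything is coordinatewise in `tᵢ = (aᵢᵀy - bᵢ)²`. A concave function lies below its right
tangent lines, `φ(s) ≤ φ(t) + φ'₊(t) (s - t)`; summed at `s = (aᵢᵀx - bᵢ)²` this is the
majorization. For the gradients, `d/du φ(u²) = 2 φ'₊(u²) u`: at `u ≠ 0` since `φ` is
differentiable at `u² > 0`, so its right derivative is its derivative, and at `u = 0` since `u²`
stays in `[0, ∞)`, where only the right derivative of `φ` at `0` matters.
-/

open Set Filter Topology

namespace ConcaveOn

variable {S : Set ℝ} {f : ℝ → ℝ} {f' x y : ℝ}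

lemma le_slope_of_hasDerivWithinAt_Ioi_right (hfc : ConcaveOn ℝ S f) (hx : x ∈ S) (hy : y ∈ S)
    (hxy : x < y) (hS : S ∈ 𝓝[>] y) (hf' : HasDerivWithinAt f f' (Ioi y) y) :
    f' ≤ slope f x y := by
  apply le_of_tendsto <| (hasDerivWithinAt_iff_tendsto_slope' self_notMem_Ioi).mp hf'
  filter_upwards [hS, self_mem_nhdsWithin] with u huS (hyu : y < u)
  rw [slope_comm f x y]
  exact hfc.slope_anti hy ⟨hx, hxy.ne⟩ ⟨huS, hyu.ne'⟩ (hxy.trans hyu).le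

lemma le_add_mul_sub_of_hasDerivWithinAt_Ici (hfc : ConcaveOn ℝ S f) (hx : x ∈ S) (hy : y ∈ S)
    (hS : S ∈ 𝓝[>] y) (hf' : HasDerivWithinAt f f' (Ici y) y) :
    f x ≤ f y + f' * (x - y) := by
  rcases lt_trichotomy x y with hxy | rfl | hyx
  · have hslope := hfc.le_slope_of_hasDerivWithinAt_Ioi_right hx hy hxy hS hf'.Ioi_of_Ici
    rw [slope_def_field, le_div_iff₀ (sub_pos.2 hxy)] at hslope
    linarith
  · simp
  · have hslope := hfc.slope_le_of_hasDerivWithinAt_Ioi hy hx hyx hf'.Ioi_of_Ici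
    rw [slope_def_field, div_le_iff₀ (sub_pos.2 hyx)] at hslope
    linarith

end ConcaveOn

lemma HasDerivAt.congr_of_hasDerivWithinAt_Ici {f : ℝ → ℝ} {f₀' f₁' x : ℝ}
    (h₀ : HasDerivAt f f₀' x) (h₁ : HasDerivWithinAt f f₁' (Ici x) x) : HasDerivAt f f₁' x := by
  rwa [(uniqueDiffWithinAt_Ici x).eq_deriv _ h₁ h₀.hasDerivWithinAt]

lemma hasDerivAt_comp_sq {φ D : ℝ → ℝ} (hpos : ∀ t > 0, HasDerivAt φ (D t) t)
    (hzero : HasDerivWithinAt φ (D 0) (Ici 0) 0) (r : ℝ) :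
    HasDerivAt (fun t => φ (t ^ 2)) (2 * D (r ^ 2) * r) r := by
  have hsq : HasDerivAt (fun t : ℝ => t ^ 2) (2 * r) r := by simpa using hasDerivAt_pow 2 r
  rcases eq_or_ne r 0 with rfl | hr
  · simpa [Function.comp_def] using
      hzero.scomp_hasDerivAt_of_eq 0 hsq (fun t => sq_nonneg t) (by simp)
  · exact ((hpos (r ^ 2) (by positivity)).comp r hsq).congr_deriv (by ring)

lemma hasGradientAt_sum_apply {ι : Type*} [Fintype ι] (f : ι → ℝ → ℝ) {c x : ι → ℝ}
    (h : ∀ i, HasDerivAt (f i) (c i) (x i)) :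
    HasGradientAt (fun u : EuclideanSpace ℝ ι => ∑ i, f i (u i)) (WithLp.toLp 2 c)
      (WithLp.toLp 2 x) := by
  rw [hasGradientAt_iff_hasFDerivAt]
  have hF : HasFDerivAt (fun u : EuclideanSpace ℝ ι => ∑ i, f i (u i))
      (∑ i, c i • EuclideanSpace.proj (𝕜 := ℝ) i) (WithLp.toLp 2 x) :=
    HasFDerivAt.fun_sum fun i _ =>
      (h i).comp_hasFDerivAt (WithLp.toLp 2 x) (EuclideanSpace.proj (𝕜 := ℝ) i).hasFDerivAt
  refine hF.congr_fderiv ?_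
  ext v
  simp [PiLp.inner_apply, mul_comm]

theorem surrogate_value_gradient_majorization_general {p n : ℕ} (φ : ℝ → ℝ)
    (hconc : ConcaveOn ℝ (Set.Ici 0) φ)
    (φ' : ℝ → ℝ) (hderiv : ∀ t > (0:ℝ), HasDerivAt φ (φ' t) t)
    (Dp : ℝ → ℝ) (hDp : ∀ t ≥ (0:ℝ), HasDerivWithinAt φ (Dp t) (Set.Ici t) t)
    (A : Matrix (Fin p) (Fin n) ℝ) (b : Fin p → ℝ) (σ : ℝ) (y : Fin n → ℝ) :
    (∑ i, φ ((A.mulVec y - b) i ^ 2) - σ =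
      ∑ i, Dp ((A.mulVec y - b) i ^ 2) * (A.mulVec y - b) i ^ 2
        - (σ - ∑ i, φ ((A.mulVec y - b) i ^ 2)
            + ∑ i, Dp ((A.mulVec y - b) i ^ 2) * (A.mulVec y - b) i ^ 2)) ∧
    (HasGradientAt (fun u : EuclideanSpace ℝ (Fin p) => ∑ i, φ (u i ^ 2))
        ((WithLp.toLp 2 fun i => 2 * Dp ((A.mulVec y - b) i ^ 2) * (A.mulVec y - b) i :
          EuclideanSpace ℝ (Fin p)))
        ((WithLp.toLp 2 fun i => (A.mulVec y - b) i : EuclideanSpace ℝ (Fin p))) ∧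
      HasGradientAt
        (fun u : EuclideanSpace ℝ (Fin p) => ∑ i, Dp ((A.mulVec y - b) i ^ 2) * u i ^ 2)
        ((WithLp.toLp 2 fun i => 2 * Dp ((A.mulVec y - b) i ^ 2) * (A.mulVec y - b) i :
          EuclideanSpace ℝ (Fin p)))
        ((WithLp.toLp 2 fun i => (A.mulVec y - b) i : EuclideanSpace ℝ (Fin p)))) ∧
    ∀ x : Fin n → ℝ,
      ∑ i, φ ((A.mulVec x - b) i ^ 2) - σ ≤
        ∑ i, Dp ((A.mulVec y - b) i ^ 2) * (A.mulVec x - b) i ^ 2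
          - (σ - ∑ i, φ ((A.mulVec y - b) i ^ 2)
              + ∑ i, Dp ((A.mulVec y - b) i ^ 2) * (A.mulVec y - b) i ^ 2) := by
  set r := A.mulVec y - b
  have hDp_pos : ∀ t > 0, HasDerivAt φ (Dp t) t := fun t ht =>
    (hderiv t ht).congr_of_hasDerivWithinAt_Ici (hDp t ht.le)
  refine ⟨by ring, ⟨?_, ?_⟩, fun x => ?_⟩
  · exact hasGradientAt_sum_apply (fun _ t => φ (t ^ 2)) fun i =>
      hasDerivAt_comp_sq hDp_pos (hDp 0 le_rfl) (r i)
  · refine hasGradientAt_sum_apply (fun i t => Dp (r i ^ 2) * t ^ 2) fun i => ?_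
    exact ((hasDerivAt_pow 2 (r i)).const_mul (Dp (r i ^ 2))).congr_deriv (by
      simp only [Nat.cast_ofNat, Nat.add_one_sub_one, pow_one]; ring)
  · have htangent : ∀ i, φ ((A.mulVec x - b) i ^ 2) ≤
        φ (r i ^ 2) + Dp (r i ^ 2) * ((A.mulVec x - b) i ^ 2 - r i ^ 2) := fun i =>
      hconc.le_add_mul_sub_of_hasDerivWithinAt_Ici (mem_Ici.2 (sq_nonneg _))
        (mem_Ici.2 (sq_nonneg _))
        (mem_of_superset self_mem_nhdsWithin fun t ht => (sq_nonneg (r i)).trans (le_of_lt ht))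
        (hDp _ (sq_nonneg _))
    have hsum := Finset.sum_le_sum fun i (_ : i ∈ Finset.univ) => htangent i
    simp only [Finset.sum_add_distrib, mul_sub, Finset.sum_sub_distrib] at hsum
    linarith

/-- Properties of the convex surrogate `ℓ^y` of the concave-of-squares loss `ℓ`:
(a) equality of values at `y` (in the shifted form), (b) equality of gradients at `Ay - b`,
and (c) global majorization. -/
theorem surrogate_value_gradient_majorization {p n : ℕ} (φ : ℝ → ℝ)
    (hcont : ContinuousOn φ (Set.Ici 0))
    (hconc : ConcaveOn ℝ (Set.Ici 0) φ)
    (h0 : φ 0 = 0) (hnonneg : ∀ t ≥ (0:ℝ), 0 ≤ φ t)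
    (φ' : ℝ → ℝ) (hderiv : ∀ t > (0:ℝ), HasDerivAt φ (φ' t) t)
    (Dp : ℝ → ℝ) (hDp : ∀ t ≥ (0:ℝ), HasDerivWithinAt φ (Dp t) (Set.Ici t) t)
    (A : Matrix (Fin p) (Fin n) ℝ) (b : Fin p → ℝ) (σ : ℝ) (y : Fin n → ℝ) :
    (∑ i, φ ((A.mulVec y - b) i ^ 2) - σ =
      ∑ i, Dp ((A.mulVec y - b) i ^ 2) * (A.mulVec y - b) i ^ 2
        - (σ - ∑ i, φ ((A.mulVec y - b) i ^ 2)
            + ∑ i, Dp ((A.mulVec y - b) i ^ 2) * (A.mulVec y - b) i ^ 2)) ∧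
    (HasGradientAt (fun u : EuclideanSpace ℝ (Fin p) => ∑ i, φ (u i ^ 2))
        ((WithLp.toLp 2 fun i => 2 * Dp ((A.mulVec y - b) i ^ 2) * (A.mulVec y - b) i :
          EuclideanSpace ℝ (Fin p)))
        ((WithLp.toLp 2 fun i => (A.mulVec y - b) i : EuclideanSpace ℝ (Fin p))) ∧
      HasGradientAt
        (fun u : EuclideanSpace ℝ (Fin p) => ∑ i, Dp ((A.mulVec y - b) i ^ 2) * u i ^ 2)
        ((WithLp.toLp 2 fun i => 2 * Dp ((A.mulVec y - b) i ^ 2) * (A.mulVec y - b) i :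
          EuclideanSpace ℝ (Fin p)))
        ((WithLp.toLp 2 fun i => (A.mulVec y - b) i : EuclideanSpace ℝ (Fin p)))) ∧
    ∀ x : Fin n → ℝ,
      ∑ i, φ ((A.mulVec x - b) i ^ 2) - σ ≤
        ∑ i, Dp ((A.mulVec y - b) i ^ 2) * (A.mulVec x - b) i ^ 2
          - (σ - ∑ i, φ ((A.mulVec y - b) i ^ 2)
              + ∑ i, Dp ((A.mulVec y - b) i ^ 2) * (A.mulVec y - b) i ^ 2) :=
  surrogate_value_gradient_majorization_general φ hconc φ' hderiv Dp hDp A b σ y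
end

section
/- Let $D \subseteq \mathbb{R}^n$ be a nonempty closed convex set and $B$ the closed unit ball. Define $\Theta(v) = d(v,D)^2 - 1$. Then $B + D = \{v \in \mathbb{R}^n : \Theta(v) \le 0\}$, and the normal cone of the convex set $B+D$ at a point $v$ with $\Theta(v) = 0$ is $\mathcal{N}_{B+D}(v) = \{t(v - P_D(v)) : t \ge 0\}$, where $P_D$ denotes the metric projection onto $D$; moreover $\mathcal{N}_{B+D}(v) = \{0\}$ when $\Theta(v) < 0$. -/
open RealInnerProductSpace
open scoped Pointwise

noncomputable section

def normalCone {n : ℕ} (C : Set (EuclideanSpace ℝ (Fin n))) (x : EuclideanSpace ℝ (Fin n)) :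
    Set (EuclideanSpace ℝ (Fin n)) :=
  {v | ∀ y ∈ C, ⟪v, y - x⟫ ≤ 0}

/-!
If `p ∈ D` and `w` is normal to `B + D` at `v`, testing against `p + b` for `b ∈ B` gives
`sup_{b ∈ B} ⟪w, b⟫ = ‖w‖ ≤ ⟪w, v - p⟫ ≤ ‖w‖ ‖v - p‖`. For `p = P v` this forces `w = 0` when
`‖v - p‖ < 1`, and equality in Cauchy–Schwarz, i.e. `w ∈ ℝ≥0 (v - p)`, when `‖v - p‖ = 1`.
Conversely `v - P v` is normal at a boundary point by the variational inequality
`⟪v - P v, d - P v⟫ ≤ 0` characterizing the projection onto a convex set.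
-/

theorem closedBall_zero_add_eq_setOf_infDist_le {E : Type*} [SeminormedAddCommGroup E]
    {D : Set E} (hD : ∀ v, ∃ p ∈ D, ‖v - p‖ = Metric.infDist v D) (r : ℝ) :
    Metric.closedBall (0 : E) r + D = {v | Metric.infDist v D ≤ r} := by
  ext v
  constructor
  · rintro ⟨b, hb, d, hd, rfl⟩
    calc Metric.infDist (b + d) D ≤ dist (b + d) d := Metric.infDist_le_dist_of_mem hd
      _ = ‖b‖ := by rw [dist_eq_norm, add_sub_cancel_right]
      _ ≤ r := mem_closedBall_zero_iff.1 hb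
  · intro hv
    obtain ⟨p, hp, hvp⟩ := hD v
    exact ⟨v - p, mem_closedBall_zero_iff.2 (hvp.trans_le hv), p, hp, sub_add_cancel v p⟩

section NormalCone

variable {E : Type*} [NormedAddCommGroup E] [InnerProductSpace ℝ E] {D : Set E} {v p w : E}

theorem real_inner_sub_nonpos_of_norm_eq_infDist (hD : Convex ℝ D) (hp : p ∈ D)
    (hvp : ‖v - p‖ = Metric.infDist v D) {d : E} (hd : d ∈ D) : ⟪v - p, d - p⟫ ≤ 0 := by
  refine (norm_eq_iInf_iff_real_inner_le_zero hD hp).1 ?_ d hd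
  rw [hvp, Metric.infDist_eq_iInf]
  exact iInf_congr fun y => dist_eq_norm v y

theorem norm_le_inner_sub_of_forall_inner_le (hp : p ∈ D)
    (hw : ∀ y ∈ Metric.closedBall (0 : E) 1 + D, ⟪w, y - v⟫ ≤ 0) : ‖w‖ ≤ ⟪w, v - p⟫ := by
  rcases eq_or_ne w 0 with rfl | hw0
  · simp
  have hy : ‖w‖⁻¹ • w + p ∈ Metric.closedBall (0 : E) 1 + D :=
    Set.add_mem_add (mem_closedBall_zero_iff.2 (by simp [norm_smul, hw0])) hp
  have key := hw _ hy
  rw [show ‖w‖⁻¹ • w + p - v = ‖w‖⁻¹ • w - (v - p) by abel, inner_sub_right,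
    real_inner_smul_right, real_inner_self_eq_norm_sq,
    show ‖w‖⁻¹ * ‖w‖ ^ 2 = ‖w‖ by field_simp] at key
  linarith

theorem eq_zero_of_forall_inner_le (hp : p ∈ D) (hvp : ‖v - p‖ < 1)
    (hw : ∀ y ∈ Metric.closedBall (0 : E) 1 + D, ⟪w, y - v⟫ ≤ 0) : w = 0 := by
  have h : ‖w‖ ≤ ‖w‖ * ‖v - p‖ :=
    (norm_le_inner_sub_of_forall_inner_le hp hw).trans (real_inner_le_norm w (v - p))
  exact norm_le_zero_iff.1 (by nlinarith [norm_nonneg w])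

theorem eq_norm_smul_of_forall_inner_le (hp : p ∈ D) (hvp : ‖v - p‖ = 1)
    (hw : ∀ y ∈ Metric.closedBall (0 : E) 1 + D, ⟪w, y - v⟫ ≤ 0) : w = ‖w‖ • (v - p) := by
  have h : ⟪w, v - p⟫ = ‖w‖ * ‖v - p‖ :=
    le_antisymm (real_inner_le_norm w (v - p))
      (by simpa [hvp] using norm_le_inner_sub_of_forall_inner_le hp hw)
  simpa [hvp] using inner_eq_norm_mul_iff_real.1 h

theorem inner_sub_nonpos_of_mem_closedBall_add (hvp : ‖v - p‖ = 1)
    (hproj : ∀ d ∈ D, ⟪v - p, d - p⟫ ≤ 0) {y : E} (hy : y ∈ Metric.closedBall (0 : E) 1 + D) :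
    ⟪v - p, y - v⟫ ≤ 0 := by
  obtain ⟨b, hb, d, hd, rfl⟩ := hy
  have hb : ‖b‖ ≤ 1 := mem_closedBall_zero_iff.1 hb
  calc ⟪v - p, b + d - v⟫ = ⟪v - p, b⟫ + ⟪v - p, d - p⟫ - ‖v - p‖ ^ 2 := by
        rw [show b + d - v = b + (d - p) - (v - p) by abel, inner_sub_right, inner_add_right,
          real_inner_self_eq_norm_sq]
    _ ≤ ‖v - p‖ * ‖b‖ + 0 - ‖v - p‖ ^ 2 := by
        gcongr
        exacts [real_inner_le_norm _ _, hproj d hd]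
    _ ≤ 0 := by rw [hvp]; linarith

end NormalCone

theorem ball_plus_convex_normal_cone_general {n : ℕ}
    (D : Set (EuclideanSpace ℝ (Fin n)))
    (hDconv : Convex ℝ D)
    (P : EuclideanSpace ℝ (Fin n) → EuclideanSpace ℝ (Fin n))
    (hP : ∀ v, P v ∈ D ∧ ‖v - P v‖ = Metric.infDist v D) :
    (Metric.closedBall (0 : EuclideanSpace ℝ (Fin n)) 1 + D =
      {v | Metric.infDist v D ^ 2 - 1 ≤ 0}) ∧
    (∀ v, Metric.infDist v D ^ 2 - 1 = 0 →
      normalCone (Metric.closedBall (0 : EuclideanSpace ℝ (Fin n)) 1 + D) v =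
        {w | ∃ t : ℝ, 0 ≤ t ∧ w = t • (v - P v)}) ∧
    (∀ v, Metric.infDist v D ^ 2 - 1 < 0 →
      normalCone (Metric.closedBall (0 : EuclideanSpace ℝ (Fin n)) 1 + D) v = {0}) := by
  have hdist : ∀ v, 0 ≤ Metric.infDist v D := fun v => Metric.infDist_nonneg
  refine ⟨?_, fun v hv => ?_, fun v hv => ?_⟩
  · rw [closedBall_zero_add_eq_setOf_infDist_le (fun v => ⟨P v, hP v⟩)]
    ext v
    simp only [Set.mem_ofPred_eq, sub_nonpos, sq_le_one_iff₀ (hdist v)]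
  · have hvP : ‖v - P v‖ = 1 := by
      rwa [(hP v).2, ← pow_eq_one_iff_of_nonneg (hdist v) two_ne_zero, ← sub_eq_zero]
    ext w
    constructor
    · exact fun hw => ⟨‖w‖, norm_nonneg w, eq_norm_smul_of_forall_inner_le (hP v).1 hvP hw⟩
    · rintro ⟨t, ht, rfl⟩ y hy
      rw [real_inner_smul_left]
      refine mul_nonpos_of_nonneg_of_nonpos ht (inner_sub_nonpos_of_mem_closedBall_add hvP ?_ hy)
      exact fun d hd => real_inner_sub_nonpos_of_norm_eq_infDist hDconv (hP v).1 (hP v).2 hd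
  · have hvP : ‖v - P v‖ < 1 := by
      rwa [(hP v).2, ← sq_lt_one_iff₀ (hdist v), ← sub_neg]
    ext w
    constructor
    · exact fun hw => eq_zero_of_forall_inner_le (hP v).1 hvP hw
    · rintro rfl y -
      simp

/-- Description of the Minkowski sum `B + D` as a sublevel set of
`Θ(v) = d(v,D)² - 1`, and of its normal cone via the metric projection onto `D`. -/
theorem ball_plus_convex_normal_cone {n : ℕ}
    (D : Set (EuclideanSpace ℝ (Fin n)))
    (hDne : D.Nonempty) (hDcl : IsClosed D) (hDconv : Convex ℝ D)
    (P : EuclideanSpace ℝ (Fin n) → EuclideanSpace ℝ (Fin n))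
    (hP : ∀ v, P v ∈ D ∧ ‖v - P v‖ = Metric.infDist v D) :
    (Metric.closedBall (0 : EuclideanSpace ℝ (Fin n)) 1 + D =
      {v | Metric.infDist v D ^ 2 - 1 ≤ 0}) ∧
    (∀ v, Metric.infDist v D ^ 2 - 1 = 0 →
      normalCone (Metric.closedBall (0 : EuclideanSpace ℝ (Fin n)) 1 + D) v =
        {w | ∃ t : ℝ, 0 ≤ t ∧ w = t • (v - P v)}) ∧
    (∀ v, Metric.infDist v D ^ 2 - 1 < 0 →
      normalCone (Metric.closedBall (0 : EuclideanSpace ℝ (Fin n)) 1 + D) v = {0}) :=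
  ball_plus_convex_normal_cone_general D hDconv P hP
end
end

section
/- Let $\varphi:[0,\infty)\to[0,\infty)$ be continuous, concave with $\varphi(0)=0$ and positive derivative on $(0,\infty)$, let $A \in \mathbb{R}^{p\times n}$, $b \in \mathbb{R}^p$, $\sigma > 0$, and let $C \subseteq \mathbb{R}^n$ be convex with some $\hat x \in C$ satisfying $A\hat x = b$. Set $\ell(u) = \sum_{i=1}^p\varphi(u_i^2)$. Then for any $y \in C$ with $\ell(Ay-b) \le \sigma$, the implication holds: if $\lambda \ge 0$, $\lambda(\ell(Ay-b)-\sigma) = 0$ and $-\lambda A^T\nabla\ell(Ay-b) \in \mathcal{N}_C(y)$, then $\lambda = 0$. -/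
open RealInnerProductSpace

noncomputable section

open Matrix

/-! If `λ > 0`, complementarity makes the constraint active, so the residual `u = A y - b` is
nonzero. Testing the normal-cone condition at the point `x̂` with `A x̂ = b` gives
`λ ⟨∇ℓ(u), u⟩ ≤ 0`, while `⟨∇ℓ(u), u⟩ = ∑ 2 φ'(uᵢ²) uᵢ² > 0` because `φ' > 0` on `(0, ∞)`;
the right derivative `Dp` agrees with `φ'` there by uniqueness of one-sided derivatives. -/

theorem HasDerivWithinAt.eq_of_hasDerivAt_of_Ici {f : ℝ → ℝ} {f₁ f₂ t : ℝ}
    (h₁ : HasDerivWithinAt f f₁ (Set.Ici t) t) (h₂ : HasDerivAt f f₂ t) : f₁ = f₂ :=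
  (uniqueDiffWithinAt_Ici t).eq_deriv _ h₁ h₂.hasDerivWithinAt

theorem ne_zero_of_sum_comp_sq_pos {ι : Type*} [Fintype ι] {φ : ℝ → ℝ} (h0 : φ 0 = 0)
    {u : ι → ℝ} (hu : 0 < ∑ i, φ (u i ^ 2)) : u ≠ 0 := by
  rintro rfl
  simp [h0] at hu

theorem dotProduct_sq_weighted_pos {ι : Type*} [Fintype ι] {w : ℝ → ℝ}
    (hw : ∀ t > 0, 0 < w t) {u : ι → ℝ} (hu : u ≠ 0) :
    0 < (fun i => 2 * w (u i ^ 2) * u i) ⬝ᵥ u := by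
  obtain ⟨i₀, hi₀ : u i₀ ≠ 0⟩ := Function.ne_iff.mp hu
  have hterm : ∀ i, u i ≠ 0 → 0 < 2 * w (u i ^ 2) * u i * u i := fun i hi => by
    have := hw _ (sq_pos_of_ne_zero hi)
    nlinarith [mul_self_pos.mpr hi]
  refine Finset.sum_pos' (fun i _ => ?_) ⟨i₀, Finset.mem_univ _, hterm i₀ hi₀⟩
  by_cases hi : u i = 0
  · simp [hi]
  · exact (hterm i hi).le

theorem inner_toLp_transpose_mulVec {m ι : Type*} [Fintype m] [Fintype ι] (A : Matrix m ι ℝ)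
    (g : m → ℝ) (v : EuclideanSpace ℝ ι) :
    ⟪(WithLp.toLp 2 (A.transpose *ᵥ g) : EuclideanSpace ℝ ι), v⟫ = g ⬝ᵥ (A *ᵥ v) := by
  rw [EuclideanSpace.inner_eq_star_dotProduct, star_trivial, dotProduct_comm,
    mulVec_transpose, ← dotProduct_mulVec]

theorem mul_dotProduct_residual_nonpos_of_mem_normalCone {p n : ℕ}
    (A : Matrix (Fin p) (Fin n) ℝ) (b g : Fin p → ℝ) (lam : ℝ)
    {C : Set (EuclideanSpace ℝ (Fin n))} {xhat y : EuclideanSpace ℝ (Fin n)}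
    (hxhatC : xhat ∈ C) (hxhat : A *ᵥ xhat = b)
    (hnc : -(lam • (WithLp.toLp 2 (A.transpose *ᵥ g) : EuclideanSpace ℝ (Fin n))) ∈
      normalCone C y) :
    lam * (g ⬝ᵥ (A *ᵥ y - b)) ≤ 0 := by
  have h := hnc xhat hxhatC
  rwa [inner_neg_left, inner_smul_left, inner_toLp_transpose_mulVec, WithLp.ofLp_sub,
    mulVec_sub, hxhat, ← neg_sub, dotProduct_neg, conj_trivial, mul_neg, neg_neg] at h

theorem structured_constraint_MFCQ_general {p n : ℕ} (φ : ℝ → ℝ)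
    (h0 : φ 0 = 0)
    (φ' : ℝ → ℝ) (hderiv : ∀ t > (0:ℝ), HasDerivAt φ (φ' t) t)
    (hpos : ∀ t > (0:ℝ), 0 < φ' t)
    (Dp : ℝ → ℝ) (hDp : ∀ t ≥ (0:ℝ), HasDerivWithinAt φ (Dp t) (Set.Ici t) t)
    (A : Matrix (Fin p) (Fin n) ℝ) (b : Fin p → ℝ) (σ : ℝ) (hσ : 0 < σ)
    (C : Set (EuclideanSpace ℝ (Fin n)))
    (xhat : EuclideanSpace ℝ (Fin n)) (hxhatC : xhat ∈ C)
    (hxhat : A.mulVec xhat = b)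
    (y : EuclideanSpace ℝ (Fin n))
    (lam : ℝ) (hlam : 0 ≤ lam)
    (hcomp : lam * ((∑ i, φ ((A.mulVec y - b) i ^ 2)) - σ) = 0)
    (hnc : -(lam • ((WithLp.toLp 2 (A.transpose.mulVec
        (fun i => 2 * Dp ((A.mulVec y - b) i ^ 2) * (A.mulVec y - b) i)) :
        EuclideanSpace ℝ (Fin n)))) ∈ normalCone C y) :
    lam = 0 := by
  by_contra hne
  have hlam_pos : 0 < lam := hlam.lt_of_ne' hne
  have hactive : ∑ i, φ ((A *ᵥ y - b) i ^ 2) = σ :=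
    sub_eq_zero.mp ((mul_eq_zero.mp hcomp).resolve_left hlam_pos.ne')
  have hres : A *ᵥ y - b ≠ 0 := ne_zero_of_sum_comp_sq_pos h0 (hactive ▸ hσ)
  have hDp_pos : ∀ t > (0:ℝ), 0 < Dp t := fun t ht =>
    (hDp t ht.le).eq_of_hasDerivAt_of_Ici (hderiv t ht) ▸ hpos t ht
  have hgrad := dotProduct_sq_weighted_pos hDp_pos hres
  have hcone := mul_dotProduct_residual_nonpos_of_mem_normalCone A b _ lam hxhatC hxhat hnc
  exact (mul_pos hlam_pos hgrad).not_ge hcone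

/-- MFCQ for the structured nonconvex constraint `ℓ(Ax - b) ≤ σ` with
`ℓ(u) = ∑ φ(uᵢ²)` under strong strict feasibility (`A x̂ = b` for some `x̂ ∈ C`). -/
theorem structured_constraint_MFCQ {p n : ℕ} (φ : ℝ → ℝ)
    (hcont : ContinuousOn φ (Set.Ici 0))
    (hconc : ConcaveOn ℝ (Set.Ici 0) φ)
    (h0 : φ 0 = 0) (hnonneg : ∀ t ≥ (0:ℝ), 0 ≤ φ t)
    (φ' : ℝ → ℝ) (hderiv : ∀ t > (0:ℝ), HasDerivAt φ (φ' t) t)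
    (hpos : ∀ t > (0:ℝ), 0 < φ' t)
    (Dp : ℝ → ℝ) (hDp : ∀ t ≥ (0:ℝ), HasDerivWithinAt φ (Dp t) (Set.Ici t) t)
    (A : Matrix (Fin p) (Fin n) ℝ) (b : Fin p → ℝ) (σ : ℝ) (hσ : 0 < σ)
    (C : Set (EuclideanSpace ℝ (Fin n))) (hCconv : Convex ℝ C)
    (xhat : EuclideanSpace ℝ (Fin n)) (hxhatC : xhat ∈ C)
    (hxhat : A.mulVec xhat = b)
    (y : EuclideanSpace ℝ (Fin n)) (hyC : y ∈ C)
    (hyfeas : ∑ i, φ ((A.mulVec y - b) i ^ 2) ≤ σ)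
    (lam : ℝ) (hlam : 0 ≤ lam)
    (hcomp : lam * ((∑ i, φ ((A.mulVec y - b) i ^ 2)) - σ) = 0)
    (hnc : -(lam • ((WithLp.toLp 2 (A.transpose.mulVec
        (fun i => 2 * Dp ((A.mulVec y - b) i ^ 2) * (A.mulVec y - b) i)) :
        EuclideanSpace ℝ (Fin n)))) ∈ normalCone C y) :
    lam = 0 :=
  structured_constraint_MFCQ_general φ h0 φ' hderiv hpos Dp hDp A b σ hσ C xhat hxhatC hxhat y lam
    hlam hcomp hnc
end
end
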